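/- Let P be an n×n orthogonal projection and X a Hermitian matrix with X = XP + PX (P-codiagonal). Then e^{iX} S_P = S_P e^{−iX}, where S_P = 2P − 1. -/

import Mathlib

open Matrix
open scoped ComplexOrder

noncomputable section

/-- n×n complex matrices -/
abbrev Mat (n : ℕ) := Matrix (Fin n) (Fin n) ℂ

/-- the former `Matrix.PosSemidef.sqrt` (removed from Mathlib), with its old definition -/
noncomputable def psdSqrtOld {n : ℕ} {A : Mat n} (hA : A.PosSemidef) : Mat n :=
  hA.1.eigenvectorUnitary.1 * diagonal ((↑) ∘ Real.sqrt ∘ hA.1.eigenvalues) *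
    (star hA.1.eigenvectorUnitary : Mat n)

theorem psdSqrtOld_isHermitian {n : ℕ} {A : Mat n} (hA : A.PosSemidef) :
    (psdSqrtOld hA).IsHermitian := by
  have hD : (diagonal (((↑) ∘ Real.sqrt ∘ hA.1.eigenvalues) : Fin n → ℂ)).IsHermitian :=
    isHermitian_diagonal_of_self_adjoint _ (by ext i; simp)
  exact isHermitian_mul_mul_conjTranspose (hA.1.eigenvectorUnitary : Mat n) hD

/-- modulus |A| = sqrt (Aᴴ A) -/
noncomputable def matAbs {n : ℕ} (A : Mat n) : Mat n :=
  psdSqrtOld (Matrix.posSemidef_conjTranspose_mul_self A)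

/-- spectral (operator) norm -/
noncomputable def specNorm {n : ℕ} (A : Mat n) : ℝ :=
  ‖Matrix.toEuclideanCLM (𝕜 := ℂ) (n := Fin n) A‖

/-- Löwner order: `A ≤ B` iff `B - A` is positive semidefinite -/
def loewnerLE {n : ℕ} (A B : Mat n) : Prop := (B - A).PosSemidef

/-- singular values of `A`, arranged in non-increasing order -/
noncomputable def sval {n : ℕ} (A : Mat n) : Fin n → ℝ :=
  fun i =>
    let e := (psdSqrtOld_isHermitian (Matrix.posSemidef_conjTranspose_mul_self A)).eigenvalues
    (e ∘ Tuple.sort e) i.rev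

/-- singular values indexed by naturals (0 beyond the size) -/
noncomputable def svalNat {n : ℕ} (A : Mat n) (k : ℕ) : ℝ :=
  if h : k < n then sval A ⟨k, h⟩ else 0

/-- eigenvalues of a Hermitian matrix, arranged in non-increasing order -/
noncomputable def eigsDesc {n : ℕ} {A : Mat n} (hA : A.IsHermitian) : Fin n → ℝ :=
  fun i => (hA.eigenvalues ∘ Tuple.sort hA.eigenvalues) i.rev

/-! `S = 2P - 1` anticommutes with any `X = XP + PX`,
so `S (-Y) = Y S` for `Y = iX` passes termwise to the exponential series: `S e^{-Y} = e^Y S`. -/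

theorem semiconjBy_two_smul_sub_one_neg {𝕜 R : Type*} [Semiring 𝕜] [Ring R] [Module 𝕜 R]
    {p x : R} (hcod : x = x * p + p * x) : SemiconjBy ((2 : 𝕜) • p - 1) (-x) x := by
  rw [SemiconjBy, two_smul]
  have hdiff : x * (p + p - 1) - (p + p - 1) * -x =
      (x * p + p * x - x) + (x * p + p * x - x) := by
    noncomm_ring
  rw [← hcod, sub_self, add_zero] at hdiff
  exact (sub_eq_zero.mp hdiff).symm

theorem stmt13_general {n : ℕ} (P X : Mat n) (hcod : X = X * P + P * X) :
    NormedSpace.exp (Complex.I • X) * ((2 : ℂ) • P - 1)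
      = ((2 : ℂ) • P - 1) * NormedSpace.exp (-(Complex.I • X)) := by
  have hS : SemiconjBy ((2 : ℂ) • P - 1) (-(Complex.I • X)) (Complex.I • X) := by
    simpa only [smul_neg] using (semiconjBy_two_smul_sub_one_neg (𝕜 := ℂ) hcod).smul_right Complex.I
  -- `exp` depends only on the topology; the operator norm makes `Mat n` a Banach algebra.
  open scoped Norms.Operator in exact hS.exp_right.eq.symm

theorem stmt13 {n : ℕ} (P X : Mat n) (hP : P.IsHermitian) (hP2 : P * P = P)
    (hX : X.IsHermitian) (hcod : X = X * P + P * X) :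
    NormedSpace.exp (Complex.I • X) * ((2 : ℂ) • P - 1)
      = ((2 : ℂ) • P - 1) * NormedSpace.exp (-(Complex.I • X)) :=
  stmt13_general P X hcod

end
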